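/- Define g(m, s) = m·Φ(m/s) + s·φ(m/s) for s > 0, the expected improvement with mean gap m and standard deviation s. Then for fixed m, g is nondecreasing in s: if 0 < s₁ ≤ s₂ then g(m, s₁) ≤ g(m, s₂). -/

import Mathlib

open Real

noncomputable def stdNormalPDF (t : ℝ) : ℝ :=
  (Real.sqrt (2 * Real.pi))⁻¹ * Real.exp (-t ^ 2 / 2)

noncomputable def stdNormalCDF (t : ℝ) : ℝ :=
  ∫ s in Set.Iic t, stdNormalPDF s

/-- Closed-form expected improvement with mean gap `m` and standard deviation `s`. -/
noncomputable def eiClosedForm (m s : ℝ) : ℝ :=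
  m * stdNormalCDF (m / s) + s * stdNormalPDF (m / s)

/-! The derivative of `g(m, s)` in `s` collapses to `φ(m/s)` because `φ' t = -t φ t`: the terms
`-m²/s² · φ(m/s)` coming from `m Φ(m/s)` and `+m²/s² · φ(m/s)` coming from `s φ(m/s)` cancel.
A nonnegative derivative on `(0, ∞)` gives monotonicity. -/

open MeasureTheory Set

theorem hasDerivAt_integral_Iic {E : Type*} [NormedAddCommGroup E] [NormedSpace ℝ E]
    [CompleteSpace E] {f : ℝ → E} (hf : Continuous f) (hfi : Integrable f) (t : ℝ) :
    HasDerivAt (fun u => ∫ s in Iic u, f s) (f t) t := by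
  have hsplit : (fun u => ∫ s in Iic u, f s) = fun u => (∫ s in Iic 0, f s) + ∫ s in 0..u, f s := by
    ext u
    rw [← intervalIntegral.integral_Iic_sub_Iic hfi.integrableOn hfi.integrableOn]
    abel
  rw [hsplit]
  exact ((hf.integral_hasStrictDerivAt 0 t).hasDerivAt).const_add _

lemma stdNormalPDF_eq_gaussianPDFReal : stdNormalPDF = ProbabilityTheory.gaussianPDFReal 0 1 := by
  ext t
  simp [stdNormalPDF, ProbabilityTheory.gaussianPDFReal]

lemma continuous_stdNormalPDF : Continuous stdNormalPDF := by
  unfold stdNormalPDF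
  fun_prop

lemma stdNormalPDF_nonneg (t : ℝ) : 0 ≤ stdNormalPDF t := by
  unfold stdNormalPDF
  positivity

lemma hasDerivAt_stdNormalPDF (t : ℝ) : HasDerivAt stdNormalPDF (-t * stdNormalPDF t) t := by
  have hexp : HasDerivAt (fun x : ℝ => -x ^ 2 / 2) (-t) t := by
    exact (((hasDerivAt_pow 2 t).neg).div_const 2).congr_deriv (by ring)
  unfold stdNormalPDF
  exact (hexp.exp.const_mul _).congr_deriv (by ring)

lemma hasDerivAt_stdNormalCDF (t : ℝ) : HasDerivAt stdNormalCDF (stdNormalPDF t) t :=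
  hasDerivAt_integral_Iic continuous_stdNormalPDF
    (stdNormalPDF_eq_gaussianPDFReal ▸ ProbabilityTheory.integrable_gaussianPDFReal 0 1) t

lemma hasDerivAt_eiClosedForm_stddev (m : ℝ) {s : ℝ} (hs : 0 < s) :
    HasDerivAt (eiClosedForm m) (stdNormalPDF (m / s)) s := by
  have hquot : HasDerivAt (fun s : ℝ => m / s) (-(m / s ^ 2)) s := by
    simpa [div_eq_mul_inv, neg_div] using (hasDerivAt_inv hs.ne').const_mul m
  have hcdf := ((hasDerivAt_stdNormalCDF (m / s)).comp s hquot).const_mul m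
  have hpdf := (hasDerivAt_id s).mul ((hasDerivAt_stdNormalPDF (m / s)).comp s hquot)
  refine (hcdf.add hpdf).congr_deriv ?_
  simp only [Function.comp_apply, id]
  field_simp
  ring

theorem eiClosedForm_mono_in_stddev (m s₁ s₂ : ℝ) (h₁ : 0 < s₁) (h₂ : s₁ ≤ s₂) :
    eiClosedForm m s₁ ≤ eiClosedForm m s₂ := by
  have hmono : MonotoneOn (eiClosedForm m) (Ioi 0) := by
    refine monotoneOn_of_hasDerivWithinAt_nonneg (f' := fun s => stdNormalPDF (m / s))
      (convex_Ioi 0) (fun s hs => (hasDerivAt_eiClosedForm_stddev m hs).continuousAt.continuousWithinAt)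
      ?_ (fun s _ => stdNormalPDF_nonneg _)
    rw [interior_Ioi]
    exact fun s hs => (hasDerivAt_eiClosedForm_stddev m hs).hasDerivWithinAt
  exact hmono h₁ (h₁.trans_le h₂) h₂
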